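/- arXiv:1108.1335 — 3 statements merged into one kernel-verified Lean document; each statement's English description precedes it below -/
import Mathlib

section
/- Let Q : V → W be linear between finite-dimensional real inner product spaces with Q Qᵀ = id_W, and let a, a_k > 0, L > 0 be reals with a_{k+1} := a_k·a/(a_k + a·L^{-2}). For vectors Φ ∈ W and v ∈ V, define Ψ := v − (aL^{-2}/(a_k + aL^{-2}))·Qᵀ(Q v) + (aL^{-2}/(a_k + aL^{-2}))·Qᵀ Φ. Then (a/(2L²))·‖Φ − QΨ‖² + (a_k/2)·‖Ψ − v‖² = (a_{k+1}/(2L²))·‖Φ − Q v‖². -/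
/-!
With `u = Φ - Q v` the step reads `Ψ - v = c • Qᵀ u`, hence `Φ - Q Ψ = (1 - c) • u` because
`Q Qᵀ = id`, which also makes `Qᵀ` an isometry. Both sides are therefore multiples of `‖u‖²`, and
with `b = a / L²`, `c = b / (a_k + b)` the identity reduces to `b (1 - c)² + a_k c² = a_k b / (a_k + b)`.
-/

namespace LinearMap

variable {𝕜 E F : Type*} [RCLike 𝕜]
  [NormedAddCommGroup E] [InnerProductSpace 𝕜 E] [FiniteDimensional 𝕜 E]
  [NormedAddCommGroup F] [InnerProductSpace 𝕜 F] [FiniteDimensional 𝕜 F]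

theorem norm_adjoint_apply_of_comp_adjoint_eq_id {Q : E →ₗ[𝕜] F}
    (hQ : Q ∘ₗ adjoint Q = id) (w : F) : ‖adjoint Q w‖ = ‖w‖ := by
  have hsq : ‖adjoint Q w‖ ^ 2 = ‖w‖ ^ 2 := by
    rw [← inner_self_eq_norm_sq (𝕜 := 𝕜), ← inner_self_eq_norm_sq (𝕜 := 𝕜), adjoint_inner_left,
      ← comp_apply, hQ, id_apply]
  exact (pow_left_inj₀ (norm_nonneg _) (norm_nonneg _) two_ne_zero).mp hsq

end LinearMap

theorem mul_one_sub_div_sq_add_mul_div_sq {b d : ℝ} (h : d + b ≠ 0) :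
    b * (1 - b / (d + b)) ^ 2 + d * (b / (d + b)) ^ 2 = d * b / (d + b) := by
  field_simp
  ring

theorem stmt4_general {V W : Type*}
    [NormedAddCommGroup V] [InnerProductSpace ℝ V] [FiniteDimensional ℝ V]
    [NormedAddCommGroup W] [InnerProductSpace ℝ W] [FiniteDimensional ℝ W]
    (Q : V →ₗ[ℝ] W)
    (hQ : Q ∘ₗ LinearMap.adjoint Q = LinearMap.id)
    (a ak L : ℝ) (ha : 0 < a) (hak : 0 < ak)
    (ak1 : ℝ) (hak1 : ak1 = ak * a / (ak + a / L ^ 2))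
    (c : ℝ) (hc : c = (a / L ^ 2) / (ak + a / L ^ 2))
    (Φ : W) (v : V)
    (Ψ : V) (hΨ : Ψ = v - c • (LinearMap.adjoint Q (Q v)) + c • (LinearMap.adjoint Q Φ)) :
    (a / (2 * L ^ 2)) * ‖Φ - Q Ψ‖ ^ 2 + (ak / 2) * ‖Ψ - v‖ ^ 2
      = (ak1 / (2 * L ^ 2)) * ‖Φ - Q v‖ ^ 2 := by
  set u := Φ - Q v
  have hQQ : Q (LinearMap.adjoint Q u) = u := LinearMap.congr_fun hQ u
  have hstep : Ψ - v = c • LinearMap.adjoint Q u := by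
    rw [hΨ, map_sub]
    module
  have hresidual : Φ - Q Ψ = (1 - c) • u := by
    rw [eq_add_of_sub_eq hstep, map_add, map_smul, hQQ]
    module
  have hpos : ak + a / L ^ 2 ≠ 0 := by positivity
  have hweights := mul_one_sub_div_sq_add_mul_div_sq hpos
  rw [← hc] at hweights
  rw [hresidual, hstep, norm_smul, norm_smul, mul_pow, mul_pow,
    LinearMap.norm_adjoint_apply_of_comp_adjoint_eq_id hQ, Real.norm_eq_abs, Real.norm_eq_abs,
    sq_abs, sq_abs, hak1]
  linear_combination (‖u‖ ^ 2 / 2) * hweights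

theorem stmt4 {V W : Type*}
    [NormedAddCommGroup V] [InnerProductSpace ℝ V] [FiniteDimensional ℝ V]
    [NormedAddCommGroup W] [InnerProductSpace ℝ W] [FiniteDimensional ℝ W]
    (Q : V →ₗ[ℝ] W)
    (hQ : Q ∘ₗ LinearMap.adjoint Q = LinearMap.id)
    (a ak L : ℝ) (ha : 0 < a) (hak : 0 < ak) (hL : 0 < L)
    (ak1 : ℝ) (hak1 : ak1 = ak * a / (ak + a / L ^ 2))
    (c : ℝ) (hc : c = (a / L ^ 2) / (ak + a / L ^ 2))
    (Φ : W) (v : V)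
    (Ψ : V) (hΨ : Ψ = v - c • (LinearMap.adjoint Q (Q v)) + c • (LinearMap.adjoint Q Φ)) :
    (a / (2 * L ^ 2)) * ‖Φ - Q Ψ‖ ^ 2 + (ak / 2) * ‖Ψ - v‖ ^ 2
      = (ak1 / (2 * L ^ 2)) * ‖Φ - Q v‖ ^ 2 :=
  stmt4_general Q hQ a ak L ha hak ak1 hak1 c hc Φ v Ψ hΨ
end

section
/- With polymers in Z^d as above (connected finite sets of unit cubes, connectedness via shared (d−1)-faces), one has |X| ≤ 3^d·(1 + d(X)), where |X| is the number of cubes and d(X) is the minimal tree length on the cube centers. -/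
/-!
Put a ball of radius `1/2` around each cube center; these balls are pairwise disjoint. Along any
tree joining the centers, the function `v ↦ min (dist v s) (1/2)` rises from `0` at the center `s`
to `1/2` at any other center, and it can only change on the part of the tree inside the ball
around `s`. So (once `|X| ≥ 2`) each ball contains tree length at least `1/2`, whence
`|X| ≤ 1 + 2 d(X) ≤ 3^d (1 + d(X))`.
-/

def FaceAdj {d : ℕ} (x y : Fin d → ℤ) : Prop :=
  (∑ i, (x i - y i).natAbs) = 1

/-- A polymer: a nonempty finite set of unit-cube centers, connected via shared
`(d-1)`-dimensional faces. -/
def IsPolymer {d : ℕ} (X : Finset (Fin d → ℤ)) : Prop :=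
  X.Nonempty ∧ ∀ x ∈ X, ∀ y ∈ X,
    Relation.ReflTransGen (fun u v => u ∈ X ∧ v ∈ X ∧ FaceAdj u v) x y

noncomputable def emb {d : ℕ} (x : Fin d → ℤ) : Fin d → ℝ := fun i => (x i : ℝ)

/-- The (finite) edge set `E` of segments in the continuum connects all the cube
centers of `X`. Extra (Steiner) vertices are allowed. -/
def Connects {d : ℕ} (X : Finset (Fin d → ℤ))
    (E : Finset ((Fin d → ℝ) × (Fin d → ℝ))) : Prop :=
  ∀ x ∈ X, ∀ y ∈ X,
    Relation.ReflTransGen (fun u v => (u, v) ∈ E ∨ (v, u) ∈ E) (emb x) (emb y)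

/-- The length of a shortest (Steiner) tree connecting the cube centers of `X`,
in the sup metric (so face-adjacent cube centers are at distance 1). -/
noncomputable def treeLen {d : ℕ} (X : Finset (Fin d → ℤ)) : ℝ :=
  sInf { c : ℝ | ∃ E : Finset ((Fin d → ℝ) × (Fin d → ℝ)),
    Connects X E ∧ c = ∑ e ∈ E, dist e.1 e.2 }

open MeasureTheory Metric AffineMap Set

section TotalVariation

variable {V : Type*}

lemma SimpleGraph.Walk.sub_le_sum_map_edges {G : SimpleGraph V} (f : V → ℝ)
    (φ : Sym2 V → ℝ) (hφ : ∀ x y, G.Adj x y → f y - f x ≤ φ s(x, y)) :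
    ∀ {u v : V} (p : G.Walk u v), f v - f u ≤ (p.edges.map φ).sum
  | _, _, .nil => by simp
  | _, _, .cons h p => by
    rw [SimpleGraph.Walk.edges_cons, List.map_cons, List.sum_cons]
    linarith [hφ _ _ h, p.sub_le_sum_map_edges f φ hφ]

lemma reachable_fromEdgeSet_of_reflTransGen {E : Set (V × V)} {a b : V}
    (h : Relation.ReflTransGen (fun u v => (u, v) ∈ E ∨ (v, u) ∈ E) a b) :
    (SimpleGraph.fromEdgeSet (Sym2.mk.uncurry '' E)).Reachable a b := by
  induction h with
  | refl => rfl
  | @tail u v _ huv ih =>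
    rcases eq_or_ne u v with rfl | hne
    · exact ih
    refine ih.trans (SimpleGraph.Adj.reachable ((SimpleGraph.fromEdgeSet_adj _).2 ⟨?_, hne⟩))
    rcases huv with h | h
    exacts [⟨_, h, rfl⟩, ⟨_, h, Sym2.eq_swap⟩]

theorem sub_le_sum_abs_sub_of_reflTransGen (f : V → ℝ) {E : Finset (V × V)} {a b : V}
    (h : Relation.ReflTransGen (fun u v => (u, v) ∈ E ∨ (v, u) ∈ E) a b) :
    f b - f a ≤ ∑ e ∈ E, |f e.1 - f e.2| := by
  classical
  let φ : Sym2 V → ℝ := Sym2.lift ⟨fun x y => |f x - f y|, fun _ _ => abs_sub_comm _ _⟩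
  have hφ : ∀ e, 0 ≤ φ e := fun e => Sym2.inductionOn e fun _ _ => abs_nonneg _
  -- A path, unlike a chain of edges, uses each edge at most once.
  obtain ⟨p, hp⟩ :=
    (reachable_fromEdgeSet_of_reflTransGen (E := (E : Set (V × V))) h).exists_isPath
  have hedges : p.edges.toFinset ⊆ E.image Sym2.mk.uncurry := by
    intro e he
    have := p.edges_subset_edgeSet (List.mem_toFinset.1 he)
    rw [SimpleGraph.edgeSet_fromEdgeSet] at this
    simpa using this.1
  calc f b - f a ≤ (p.edges.map φ).sum :=
        p.sub_le_sum_map_edges f φ fun x y _ => (le_abs_self _).trans (abs_sub_comm _ _).le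
    _ = ∑ e ∈ p.edges.toFinset, φ e := (List.sum_toFinset φ hp.isTrail.edges_nodup).symm
    _ ≤ ∑ e ∈ E.image Sym2.mk.uncurry, φ e :=
      Finset.sum_le_sum_of_subset_of_nonneg hedges fun e _ _ => hφ e
    _ ≤ ∑ e ∈ E, φ (Sym2.mk.uncurry e) := Finset.sum_image_le_of_nonneg fun e _ => hφ e

end TotalVariation

lemma Real.volume_preimage_one_sub (A : Set ℝ) :
    volume ((fun t => 1 - t) ⁻¹' A) = volume A := by
  have : (fun t : ℝ => 1 - t) ⁻¹' A = Neg.neg ⁻¹' ((fun h => 1 + h) ⁻¹' A) := by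
    ext; simp [sub_eq_add_neg]
  rw [this, Measure.measure_preimage_neg, measure_preimage_add]

section LengthInBall

variable {V : Type*} [NormedAddCommGroup V] [NormedSpace ℝ V]

noncomputable def lengthInBall (s : V) (r : ℝ) (e : V × V) : ℝ :=
  dist e.1 e.2 * (volume (Icc (0 : ℝ) 1 ∩ lineMap e.1 e.2 ⁻¹' ball s r)).toReal

lemma volume_segment_inter_ball_le_one (a b s : V) (r : ℝ) :
    volume (Icc (0 : ℝ) 1 ∩ lineMap a b ⁻¹' ball s r) ≤ 1 :=
  (measure_mono inter_subset_left).trans (by simp)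

lemma lengthInBall_nonneg (s : V) (r : ℝ) (e : V × V) : 0 ≤ lengthInBall s r e :=
  mul_nonneg dist_nonneg ENNReal.toReal_nonneg

lemma lengthInBall_swap (s : V) (r : ℝ) (e : V × V) :
    lengthInBall s r e.swap = lengthInBall s r e := by
  have : Icc (0 : ℝ) 1 ∩ lineMap e.2 e.1 ⁻¹' ball s r =
      (fun t => 1 - t) ⁻¹' (Icc 0 1 ∩ lineMap e.1 e.2 ⁻¹' ball s r) := by
    ext t
    simp only [mem_inter_iff, mem_preimage, mem_Icc, lineMap_apply_one_sub]
    constructor <;> rintro ⟨⟨h0, h1⟩, h⟩ <;> exact ⟨⟨by linarith, by linarith⟩, h⟩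
  rw [lengthInBall, lengthInBall, Prod.fst_swap, Prod.snd_swap, this,
    Real.volume_preimage_one_sub, dist_comm]

lemma min_dist_sub_le_lengthInBall (a b s : V) (r : ℝ) :
    min (dist b s) r - min (dist a s) r ≤ lengthInBall s r (a, b) := by
  rcases le_or_gt (min (dist b s) r) (min (dist a s) r) with hle | hlt
  · exact (sub_nonpos.2 hle).trans (lengthInBall_nonneg s r _)
  have has : dist a s < r := by
    contrapose! hlt
    rw [min_eq_right hlt]
    exact min_le_right _ _
  rw [min_eq_left has.le] at hlt ⊢
  set δ := min (dist b s) r - dist a s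
  have hδ : 0 < δ := sub_pos.2 hlt
  have hδL : δ ≤ dist a b := by
    linarith [min_le_left (dist b s) r, dist_triangle b a s, dist_comm a b]
  have hL : 0 < dist a b := hδ.trans_le hδL
  have hsub : Ioo 0 (δ / dist a b) ⊆ Icc 0 1 ∩ lineMap a b ⁻¹' ball s r := by
    rintro t ⟨ht0, ht⟩
    rw [lt_div_iff₀ hL] at ht
    refine ⟨⟨ht0.le, by nlinarith⟩, ?_⟩
    calc dist (lineMap a b t) s ≤ dist (lineMap a b t) a + dist a s := dist_triangle _ _ _
      _ = t * dist a b + dist a s := by rw [dist_lineMap_left, Real.norm_of_nonneg ht0.le]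
      _ < r := by linarith [min_le_right (dist b s) r]
  have hvol :
      δ / dist a b ≤ (volume (Icc (0 : ℝ) 1 ∩ lineMap a b ⁻¹' ball s r)).toReal := by
    refine (ENNReal.ofReal_le_iff_le_toReal
      (ne_top_of_le_ne_top ENNReal.one_ne_top (volume_segment_inter_ball_le_one a b s r))).1 ?_
    simpa using measure_mono (μ := volume) hsub
  calc δ = dist a b * (δ / dist a b) := by field_simp
    _ ≤ lengthInBall s r (a, b) := mul_le_mul_of_nonneg_left hvol dist_nonneg

lemma abs_min_dist_sub_le_lengthInBall (a b s : V) (r : ℝ) :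
    |min (dist a s) r - min (dist b s) r| ≤ lengthInBall s r (a, b) := by
  refine abs_sub_le_iff.2 ⟨?_, min_dist_sub_le_lengthInBall a b s r⟩
  rw [← lengthInBall_swap]
  exact min_dist_sub_le_lengthInBall b a s r

lemma le_sum_lengthInBall {E : Finset (V × V)} {s t : V} {r : ℝ} (hr : 0 ≤ r)
    (hst : r ≤ dist t s)
    (h : Relation.ReflTransGen (fun u v => (u, v) ∈ E ∨ (v, u) ∈ E) s t) :
    r ≤ ∑ e ∈ E, lengthInBall s r e :=
  calc r = min (dist t s) r - min (dist s s) r := by simp [min_eq_right hst, hr]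
    _ ≤ ∑ e ∈ E, |min (dist e.1 s) r - min (dist e.2 s) r| :=
      sub_le_sum_abs_sub_of_reflTransGen (fun v => min (dist v s) r) h
    _ ≤ ∑ e ∈ E, lengthInBall s r e :=
      Finset.sum_le_sum fun e _ => abs_min_dist_sub_le_lengthInBall e.1 e.2 s r

lemma sum_lengthInBall_le {S : Finset V} {r : ℝ}
    (hS : (S : Set V).Pairwise fun s t => 2 * r ≤ dist s t) (e : V × V) :
    ∑ s ∈ S, lengthInBall s r e ≤ dist e.1 e.2 := by
  set A : V → Set ℝ := fun s => Icc 0 1 ∩ lineMap e.1 e.2 ⁻¹' ball s r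
  have hdisj : (S : Set V).PairwiseDisjoint A := fun s hs t ht hst =>
    ((ball_disjoint_ball (by linarith [hS hs ht hst])).preimage _).mono
      inter_subset_right inter_subset_right
  have hmeas : ∀ s ∈ S, MeasurableSet (A s) := fun s _ =>
    measurableSet_Icc.inter (isOpen_ball.preimage lineMap_continuous).measurableSet
  have hunion : ∑ s ∈ S, volume (A s) ≤ 1 := by
    rw [← measure_biUnion_finset hdisj hmeas]
    exact (measure_mono (iUnion₂_subset fun _ _ => inter_subset_left)).trans (by simp)
  calc ∑ s ∈ S, lengthInBall s r e = dist e.1 e.2 * (∑ s ∈ S, volume (A s)).toReal := by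
        rw [ENNReal.toReal_sum fun s _ =>
          ne_top_of_le_ne_top ENNReal.one_ne_top (volume_segment_inter_ball_le_one _ _ s r),
          Finset.mul_sum]
        rfl
    _ ≤ dist e.1 e.2 * 1 := by
        gcongr
        simpa using ENNReal.toReal_mono ENNReal.one_ne_top hunion
    _ = dist e.1 e.2 := mul_one _

theorem mul_card_le_sum_dist {S : Finset V} {E : Finset (V × V)} {r : ℝ} (hr : 0 ≤ r)
    (hS : (S : Set V).Pairwise fun s t => 2 * r ≤ dist s t)
    (hE : ∀ s ∈ S, ∀ t ∈ S,
      Relation.ReflTransGen (fun u v => (u, v) ∈ E ∨ (v, u) ∈ E) s t)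
    (hcard : 1 < S.card) :
    r * S.card ≤ ∑ e ∈ E, dist e.1 e.2 := by
  have hball : ∀ s ∈ S, r ≤ ∑ e ∈ E, lengthInBall s r e := by
    intro s hs
    obtain ⟨t, ht, hts⟩ := Finset.exists_mem_ne hcard s
    exact le_sum_lengthInBall hr (by linarith [hS ht hs hts]) (hE s hs t ht)
  calc r * S.card ≤ ∑ s ∈ S, ∑ e ∈ E, lengthInBall s r e := by
        simpa [mul_comm] using Finset.card_nsmul_le_sum S _ r hball
    _ = ∑ e ∈ E, ∑ s ∈ S, lengthInBall s r e := Finset.sum_comm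
    _ ≤ ∑ e ∈ E, dist e.1 e.2 := Finset.sum_le_sum fun e _ => sum_lengthInBall_le hS e

end LengthInBall

section Polymer

variable {d : ℕ}

lemma emb_injective : Function.Injective (emb (d := d)) :=
  Int.cast_injective.comp_left

lemma one_le_dist_emb {x y : Fin d → ℤ} (h : x ≠ y) : 1 ≤ dist (emb x) (emb y) := by
  obtain ⟨i, hi⟩ := Function.ne_iff.1 h
  calc (1 : ℝ) ≤ dist (x i) (y i) := by
        rw [Int.dist_eq]
        exact_mod_cast Int.one_le_abs (sub_ne_zero.2 hi)
    _ = dist (emb x i) (emb y i) := (Int.dist_cast_real _ _).symm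
    _ ≤ dist (emb x) (emb y) := dist_le_pi_dist _ _ i

lemma card_le_one_add_two_mul_sum_dist {X : Finset (Fin d → ℤ)}
    {E : Finset ((Fin d → ℝ) × (Fin d → ℝ))} (hE : Connects X E) :
    (X.card : ℝ) ≤ 1 + 2 * ∑ e ∈ E, dist e.1 e.2 := by
  rcases le_or_gt X.card 1 with h | h
  · have : (X.card : ℝ) ≤ 1 := by exact_mod_cast h
    linarith [Finset.sum_nonneg fun e (_ : e ∈ E) => dist_nonneg (x := e.1) (y := e.2)]
  have hsep : (X.image emb : Set (Fin d → ℝ)).Pairwise fun s t => 2 * 2⁻¹ ≤ dist s t := by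
    rw [Finset.coe_image]
    rintro _ ⟨x, -, rfl⟩ _ ⟨y, -, rfl⟩ hxy
    norm_num
    exact one_le_dist_emb (ne_of_apply_ne emb hxy)
  have hconn : ∀ s ∈ X.image emb, ∀ t ∈ X.image emb,
      Relation.ReflTransGen (fun u v => (u, v) ∈ E ∨ (v, u) ∈ E) s t := by
    simp only [Finset.mem_image]
    rintro _ ⟨x, hx, rfl⟩ _ ⟨y, hy, rfl⟩
    exact hE x hx y hy
  have hcard := Finset.card_image_of_injective X emb_injective
  have := mul_card_le_sum_dist (by norm_num) hsep hconn (hcard ▸ h)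
  rw [hcard] at this
  linarith

lemma IsPolymer.exists_connects {X : Finset (Fin d → ℤ)} (hX : IsPolymer X) :
    ∃ E, Connects X E := by
  classical
  refine ⟨((X ×ˢ X).filter fun p => FaceAdj p.1 p.2).image (Prod.map emb emb), ?_⟩
  intro x hx y hy
  refine Relation.ReflTransGen.lift emb (fun a b hab => Or.inl ?_) _ _ (hX.2 x hx y hy)
  exact Finset.mem_image.2 ⟨(a, b), Finset.mem_filter.2
    ⟨Finset.mem_product.2 ⟨hab.1, hab.2.1⟩, hab.2.2⟩, rfl⟩

lemma treeLen_nonneg (X : Finset (Fin d → ℤ)) : 0 ≤ treeLen X :=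
  Real.sInf_nonneg (by rintro _ ⟨E, -, rfl⟩; exact Finset.sum_nonneg fun _ _ => dist_nonneg)

lemma IsPolymer.card_le_one_add_two_mul_treeLen {X : Finset (Fin d → ℤ)} (hX : IsPolymer X) :
    (X.card : ℝ) ≤ 1 + 2 * treeLen X := by
  obtain ⟨E, hE⟩ := hX.exists_connects
  have : ((X.card : ℝ) - 1) / 2 ≤ treeLen X := le_csInf ⟨_, E, hE, rfl⟩ (by
    rintro _ ⟨E, hE, rfl⟩
    linarith [card_le_one_add_two_mul_sum_dist hE])
  linarith

end Polymer

theorem stmt9 {d : ℕ} (hd : 1 ≤ d) (X : Finset (Fin d → ℤ)) (hX : IsPolymer X) :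
    (X.card : ℝ) ≤ 3 ^ d * (1 + treeLen X) := by
  have h3 : (3 : ℝ) ≤ 3 ^ d := le_self_pow₀ (by norm_num) (by omega)
  nlinarith [hX.card_le_one_add_two_mul_treeLen, treeLen_nonneg X]
end

section
/- Let X₁,…,Xₙ be polymers whose union Y = ∪ᵢ Xᵢ is connected and which cannot be partitioned into two nonempty groups with disjoint unions (equivalently, the intersection graph on {X₁,…,Xₙ}, with edges {i,j} when Xᵢ ∩ Xⱼ ≠ ∅, is connected). Then d(Y) ≤ ∑ᵢ d(Xᵢ) + (n−1), where d denotes the normalized minimal tree length. -/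
/-!
Take near-optimal trees `Eᵢ` for the `Xᵢ` and let `F = ⋃ Eᵢ`. A chain `i = i₀, …, iₖ = j` of
pairwise intersecting polymers lets one walk in `F` from any point of `Xᵢ` to any point of `Xⱼ`,
passing from `E_{iₗ}` to `E_{iₗ₊₁}` at a common cube centre of `X_{iₗ}` and `X_{iₗ₊₁}`. Hence
`d(Y) ≤ length F ≤ ∑ᵢ length Eᵢ`, which is already the bound without the slack `n - 1`.
-/

open Finset Relation

variable {d : ℕ}

theorem Finset.sum_biUnion_le_sum_sum {ι α M : Type*} [DecidableEq α] [AddCommMonoid M]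
    [PartialOrder M] [IsOrderedAddMonoid M] (s : Finset ι) (t : ι → Finset α) {f : α → M}
    (hf : ∀ a, 0 ≤ f a) :
    ∑ a ∈ s.biUnion t, f a ≤ ∑ i ∈ s, ∑ a ∈ t i, f a := by
  classical
  induction s using Finset.induction_on with
  | empty => simp
  | insert i s hi ih =>
    calc ∑ a ∈ (insert i s).biUnion t, f a
        ≤ ∑ a ∈ t i ∪ s.biUnion t, f a + ∑ a ∈ t i ∩ s.biUnion t, f a := by
          rw [biUnion_insert]
          exact le_add_of_nonneg_right (sum_nonneg fun a _ => hf a)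
      _ = ∑ a ∈ t i, f a + ∑ a ∈ s.biUnion t, f a := sum_union_inter
      _ ≤ ∑ j ∈ insert i s, ∑ a ∈ t j, f a := by
          rw [sum_insert hi]
          exact add_le_add_right ih _

theorem Connects.mono {X : Finset (Fin d → ℤ)} {E F : Finset ((Fin d → ℝ) × (Fin d → ℝ))}
    (h : Connects X E) (hEF : E ⊆ F) : Connects X F := fun x hx y hy =>
  ReflTransGen.mono (fun _ _ => Or.imp (@hEF _) (@hEF _)) _ _ (h x hx y hy)

theorem Connects.biUnion {ι : Type*} [Fintype ι] [DecidableEq (Fin d → ℤ)]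
    {X : ι → Finset (Fin d → ℤ)} {E : ι → Finset ((Fin d → ℝ) × (Fin d → ℝ))}
    (hE : ∀ i, Connects (X i) (E i))
    (hconn : ∀ i j, ReflTransGen (fun a b => (X a ∩ X b).Nonempty) i j) :
    Connects (univ.biUnion X) (univ.biUnion E) := by
  have hF : ∀ i, Connects (X i) (univ.biUnion E) := fun i =>
    (hE i).mono (subset_biUnion_of_mem E (mem_univ i))
  intro x hx y hy
  obtain ⟨i, -, hxi⟩ := mem_biUnion.1 hx
  obtain ⟨j, -, hyj⟩ := mem_biUnion.1 hy
  suffices reach : ∀ k, ReflTransGen (fun a b => (X a ∩ X b).Nonempty) i k →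
      ∀ z ∈ X k, ReflTransGen (fun u v => (u, v) ∈ univ.biUnion E ∨ (v, u) ∈ univ.biUnion E)
        (emb x) (emb z) from
    reach j (hconn i j) y hyj
  intro k hik
  induction hik with
  | refl => exact hF i x hxi
  | tail _ hkl ih =>
    obtain ⟨w, hw⟩ := hkl
    exact fun z hz => (ih w (mem_inter.1 hw).1).trans (hF _ w (mem_inter.1 hw).2 z hz)

theorem treeLen_le_of_connects {X : Finset (Fin d → ℤ)}
    {E : Finset ((Fin d → ℝ) × (Fin d → ℝ))} (h : Connects X E) :
    treeLen X ≤ ∑ e ∈ E, dist e.1 e.2 :=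
  csInf_le ⟨0, by rintro _ ⟨E, -, rfl⟩; exact sum_nonneg fun e _ => dist_nonneg⟩ ⟨E, h, rfl⟩

theorem exists_connects_lt_treeLen_add (X : Finset (Fin d → ℤ)) {ε : ℝ} (hε : 0 < ε) :
    ∃ E, Connects X E ∧ ∑ e ∈ E, dist e.1 e.2 < treeLen X + ε := by
  have hne : { c : ℝ | ∃ E : Finset ((Fin d → ℝ) × (Fin d → ℝ)),
      Connects X E ∧ c = ∑ e ∈ E, dist e.1 e.2 }.Nonempty := by
    refine ⟨_, (X ×ˢ X).image (fun p => (emb p.1, emb p.2)), fun x hx y hy => ?_, rfl⟩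
    exact ReflTransGen.single (Or.inl (mem_image.2 ⟨(x, y), mk_mem_product hx hy, rfl⟩))
  obtain ⟨_, ⟨E, hE, rfl⟩, hlt⟩ := Real.lt_sInf_add_pos hne hε
  exact ⟨E, hE, hlt⟩

theorem treeLen_biUnion_le_sum {ι : Type*} [Fintype ι] [DecidableEq (Fin d → ℤ)]
    (X : ι → Finset (Fin d → ℤ))
    (hconn : ∀ i j, ReflTransGen (fun a b => (X a ∩ X b).Nonempty) i j) :
    treeLen (univ.biUnion X) ≤ ∑ i, treeLen (X i) := by
  refine le_of_forall_pos_lt_add fun ε hε => ?_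
  set δ := ε / (Fintype.card ι + 1)
  have hδ : 0 < δ := by positivity
  choose E hE hElt using fun i => exists_connects_lt_treeLen_add (X i) hδ
  have hcardδ : Fintype.card ι * δ < ε := by
    rw [mul_div_assoc', div_lt_iff₀ (by positivity)]
    nlinarith
  calc treeLen (univ.biUnion X)
      ≤ ∑ e ∈ univ.biUnion E, dist e.1 e.2 := treeLen_le_of_connects (Connects.biUnion hE hconn)
    _ ≤ ∑ i, ∑ e ∈ E i, dist e.1 e.2 := sum_biUnion_le_sum_sum _ _ fun _ => dist_nonneg
    _ ≤ ∑ i, (treeLen (X i) + δ) := sum_le_sum fun i _ => (hElt i).le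
    _ = ∑ i, treeLen (X i) + Fintype.card ι * δ := by
      rw [sum_add_distrib, sum_const, card_univ, nsmul_eq_mul]
    _ < ∑ i, treeLen (X i) + ε := by linarith

theorem stmt13_general {d n : ℕ} (hn : 1 ≤ n)
    (X : Fin n → Finset (Fin d → ℤ))
    (hconn : ∀ i j : Fin n,
      Relation.ReflTransGen (fun a b => ((X a) ∩ (X b)).Nonempty) i j) :
    treeLen (Finset.univ.biUnion X) ≤ (∑ i, treeLen (X i)) + ((n : ℝ) - 1) := by
  have hslack : (0 : ℝ) ≤ n - 1 := sub_nonneg.2 (by exact_mod_cast hn)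
  exact (treeLen_biUnion_le_sum X hconn).trans (le_add_of_nonneg_right hslack)

theorem stmt13 {d n : ℕ} (hd : 1 ≤ d) (hn : 1 ≤ n)
    (X : Fin n → Finset (Fin d → ℤ))
    (hpoly : ∀ i, IsPolymer (X i))
    (hconn : ∀ i j : Fin n,
      Relation.ReflTransGen (fun a b => ((X a) ∩ (X b)).Nonempty) i j) :
    treeLen (Finset.univ.biUnion X) ≤ (∑ i, treeLen (X i)) + ((n : ℝ) - 1) :=
  stmt13_general hn X hconn
end
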